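/- arXiv:2107.12788 — 4 statements merged into one kernel-verified Lean document; each statement's English description precedes it below -/
import Mathlib

section
/- Let p, r ≥ 1 and q ≥ 0 be integers, and define f(x) = −ln(1 − I_{x^r}(q+1, p)). Then, as x → 0 from the right, f(x) = C(p+q, q+1)·x^{r(q+1)} + O(x^{r(q+1)+1}); that is, the function x ↦ f(x) − C(p+q, q+1)·x^{r(q+1)} is O(x^{r(q+1)+1}) as x → 0⁺, where C(p+q, q+1) denotes the binomial coefficient. -/
/-- The regularized incomplete Beta function `I_x(a, b)` for positive integer
parameters `a, b`. -/
noncomputable def regIncBeta (a b : ℕ) (x : ℝ) : ℝ :=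
  (∫ t in (0:ℝ)..1, t ^ (a - 1) * (1 - t) ^ (b - 1))⁻¹ *
    ∫ t in (0:ℝ)..x, t ^ (a - 1) * (1 - t) ^ (b - 1)

/-!
Put `y = x ^ r`. Since `(1 - t) ^ (p - 1) = 1 + O(t)`, the incomplete integral
`∫₀^y t ^ q (1 - t) ^ (p - 1)` is `y ^ (q + 1) / (q + 1) + O(y ^ (q + 2))`, and integration by
parts gives `B(q + 1, p)⁻¹ = (q + 1) * C(p + q, q + 1)`. Hence `u = I_y(q + 1, p)` equals
`C(p + q, q + 1) * x ^ (r (q + 1)) + O(x ^ (r (q + 2)))`. Finally `-log (1 - u) = u + O(u ^ 2)`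
with `u ^ 2 = O(x ^ (2 r (q + 1)))`, and both error exponents are at least `r (q + 1) + 1`
because `r ≥ 1`.
-/

open Real Filter Asymptotics Topology

lemma integral_pow_mul_one_sub_pow_succ (a b : ℕ) :
    (a + 1 : ℝ) * ∫ t in (0:ℝ)..1, t ^ a * (1 - t) ^ (b + 1) =
      (b + 1) * ∫ t in (0:ℝ)..1, t ^ (a + 1) * (1 - t) ^ b := by
  have hderiv : ∀ t : ℝ, HasDerivAt (fun t : ℝ => t ^ (a + 1) * (1 - t) ^ (b + 1))
      ((a + 1) * (t ^ a * (1 - t) ^ (b + 1)) - (b + 1) * (t ^ (a + 1) * (1 - t) ^ b)) t := by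
    intro t
    refine ((hasDerivAt_pow (a + 1) t).mul
      (((hasDerivAt_id' t).const_sub 1).fun_pow (b + 1))).congr_deriv ?_
    push_cast
    ring
  have hint : ∀ m n : ℕ, IntervalIntegrable (fun t : ℝ => t ^ m * (1 - t) ^ n)
      MeasureTheory.volume 0 1 := fun m n => by
    apply Continuous.intervalIntegrable; fun_prop
  have hzero := intervalIntegral.integral_eq_sub_of_hasDerivAt (fun t _ => hderiv t)
    (((hint a (b + 1)).const_mul _).sub ((hint (a + 1) b).const_mul _))
  rw [intervalIntegral.integral_sub ((hint a (b + 1)).const_mul _) ((hint (a + 1) b).const_mul _),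
    intervalIntegral.integral_const_mul, intervalIntegral.integral_const_mul] at hzero
  simp only [one_pow, sub_self, zero_pow (Nat.succ_ne_zero _), mul_zero, zero_mul] at hzero
  linarith

lemma inv_integral_pow_mul_one_sub_pow (a b : ℕ) :
    (∫ t in (0:ℝ)..1, t ^ a * (1 - t) ^ b)⁻¹ =
      (a + 1) * ((a + b + 1).choose (a + 1) : ℝ) := by
  induction b generalizing a with
  | zero => simp [integral_pow]
  | succ b ih =>
    have hrec : ∫ t in (0:ℝ)..1, t ^ a * (1 - t) ^ (b + 1) =
        (b + 1) / (a + 1) * ∫ t in (0:ℝ)..1, t ^ (a + 1) * (1 - t) ^ b := by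
      rw [div_mul_eq_mul_div, eq_div_iff (by positivity), mul_comm,
        integral_pow_mul_one_sub_pow_succ]
    have hchoose := Nat.choose_succ_right_eq (a + b + 2) (a + 1)
    rw [show a + b + 2 - (a + 1) = b + 1 by omega] at hchoose
    rw [hrec, mul_inv, inv_div, ih, show a + 1 + b + 1 = a + b + 2 by ring,
      show a + (b + 1) + 1 = a + b + 2 by ring]
    field_simp
    have hchoose_real := congrArg (Nat.cast : ℕ → ℝ) hchoose
    push_cast at hchoose_real ⊢
    linear_combination hchoose_real

lemma abs_one_sub_pow_sub_one_le {t : ℝ} (h0 : 0 ≤ t) (h1 : t ≤ 1) (n : ℕ) :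
    |(1 - t) ^ n - 1| ≤ n * t := by
  have hbernoulli : 1 - n * t ≤ (1 - t) ^ n := by
    simpa [sub_eq_add_neg] using one_add_mul_le_pow (by linarith : (-2:ℝ) ≤ -t) n
  have hle_one : (1 - t) ^ n ≤ 1 := pow_le_one₀ (by linarith) (by linarith)
  rw [abs_le]
  constructor <;> nlinarith

lemma integral_pow_mul_one_sub_pow_sub_isBigO (a b : ℕ) :
    (fun y : ℝ => (∫ t in (0:ℝ)..y, t ^ a * (1 - t) ^ b) - y ^ (a + 1) / (a + 1))
      =O[𝓝[>] 0] fun y => y ^ (a + 2) := by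
  refine IsBigO.of_bound b ?_
  filter_upwards [Ioo_mem_nhdsGT (zero_lt_one' ℝ)] with y ⟨hy0, hy1⟩
  have hsub : (∫ t in (0:ℝ)..y, t ^ a * (1 - t) ^ b) - y ^ (a + 1) / (a + 1) =
      ∫ t in (0:ℝ)..y, t ^ a * ((1 - t) ^ b - 1) := by
    simp_rw [mul_sub, mul_one]
    rw [intervalIntegral.integral_sub (Continuous.intervalIntegrable (by fun_prop) _ _)
      (Continuous.intervalIntegrable (by fun_prop) _ _), integral_pow]
    simp
  have hbound : ∀ t ∈ Set.uIoc 0 y, ‖t ^ a * ((1 - t) ^ b - 1)‖ ≤ b * y ^ (a + 1) := by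
    intro t ht
    rw [Set.uIoc_of_le hy0.le] at ht
    have hsmall := abs_one_sub_pow_sub_one_le ht.1.le (ht.2.trans hy1.le) b
    rw [norm_mul, norm_pow, Real.norm_eq_abs, Real.norm_eq_abs, abs_of_pos ht.1, pow_succ]
    calc t ^ a * |(1 - t) ^ b - 1| ≤ y ^ a * (b * y) := by
          gcongr
          exacts [ht.1.le, ht.2, hsmall.trans (by gcongr; exact ht.2)]
      _ = b * (y ^ a * y) := by ring
  calc _ = ‖∫ t in (0:ℝ)..y, t ^ a * ((1 - t) ^ b - 1)‖ := by rw [hsub]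
    _ ≤ b * y ^ (a + 1) * |y - 0| := intervalIntegral.norm_integral_le_of_norm_le_const hbound
    _ = b * ‖y ^ (a + 2)‖ := by
      rw [sub_zero, abs_of_pos hy0, Real.norm_of_nonneg (by positivity)]; ring

lemma regIncBeta_sub_isBigO (a b : ℕ) :
    (fun y => regIncBeta (a + 1) (b + 1) y - (a + b + 1).choose (a + 1) * y ^ (a + 1))
      =O[𝓝[>] 0] fun y => y ^ (a + 2) := by
  refine ((integral_pow_mul_one_sub_pow_sub_isBigO a b).const_mul_left
    ((a + 1) * (a + b + 1).choose (a + 1))).congr_left fun y => ?_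
  rw [regIncBeta, add_tsub_cancel_right, add_tsub_cancel_right, inv_integral_pow_mul_one_sub_pow]
  field_simp

lemma isBigO_neg_log_one_sub_sub_self :
    (fun u : ℝ => -log (1 - u) - u) =O[𝓝 0] fun u => u ^ 2 := by
  refine IsBigO.of_bound 2 ?_
  filter_upwards [Metric.ball_mem_nhds (0 : ℝ) one_half_pos] with u hu
  rw [Metric.mem_ball, dist_zero_right, Real.norm_eq_abs] at hu
  have htaylor := abs_log_sub_add_sum_range_le (hu.trans one_half_lt_one) 1
  simp only [Finset.range_one, Finset.sum_singleton, zero_add, pow_one, Nat.cast_zero,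
    div_one] at htaylor
  rw [Real.norm_eq_abs, Real.norm_eq_abs, abs_pow,
    show -log (1 - u) - u = -(u + log (1 - u)) by ring, abs_neg]
  calc |u + log (1 - u)| ≤ |u| ^ 2 / (1 - |u|) := htaylor
    _ ≤ 2 * |u| ^ 2 := by
      rw [div_le_iff₀ (by linarith)]
      nlinarith [sq_nonneg u, abs_nonneg u]

lemma isBigO_pow_pow_of_le {m n : ℕ} (h : m ≤ n) :
    (fun x : ℝ => x ^ n) =O[𝓝 0] fun x => x ^ m := by
  rcases h.eq_or_lt with rfl | hlt
  · exact isBigO_refl _ _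
  · exact (isLittleO_pow_pow hlt).isBigO

open Asymptotics Filter in
theorem stmt1 (p q r : ℕ) (hp : 1 ≤ p) (hr : 1 ≤ r) :
    (fun x : ℝ =>
        -Real.log (1 - regIncBeta (q + 1) p (x ^ r)) -
          (Nat.choose (p + q) (q + 1) : ℝ) * x ^ (r * (q + 1)))
      =O[nhdsWithin (0 : ℝ) (Set.Ioi 0)]
        fun x : ℝ => x ^ (r * (q + 1) + 1) := by
  obtain ⟨b, rfl⟩ : ∃ b, p = b + 1 := ⟨p - 1, by omega⟩
  set n := r * (q + 1)
  have hn : 0 < n := Nat.mul_pos hr q.succ_pos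
  set u : ℝ → ℝ := fun x => regIncBeta (q + 1) (b + 1) (x ^ r)
  have hpow {k m : ℕ} (h : m ≤ k) : (fun x : ℝ => x ^ k) =O[𝓝[>] 0] fun x => x ^ m :=
    (isBigO_pow_pow_of_le h).mono nhdsWithin_le_nhds
  have hxr : Tendsto (fun x : ℝ => x ^ r) (𝓝[>] 0) (𝓝[>] 0) :=
    tendsto_nhdsWithin_of_tendsto_nhds_of_eventually_within _
      ((continuous_pow r).tendsto' 0 0 (zero_pow (by omega)) |>.mono_left nhdsWithin_le_nhds)
      (eventually_nhdsWithin_of_forall fun _ hx => pow_pos (Set.mem_Ioi.1 hx) r)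
  have hmain : (fun x => u x - (b + 1 + q).choose (q + 1) * x ^ n) =O[𝓝[>] 0]
      fun x => x ^ (n + 1) := by
    refine ((regIncBeta_sub_isBigO q b).comp_tendsto hxr).trans ?_ |>.congr_left fun x => ?_
    · have hle : n + 1 ≤ r * (q + 2) := by simp only [n]; nlinarith
      simpa only [Function.comp_def, ← pow_mul] using hpow hle
    · simp only [Function.comp_apply, u, n, pow_mul, show q + b + 1 = b + 1 + q by ring]
  have hu : u =O[𝓝[>] 0] fun x => x ^ n :=
    ((hmain.trans (hpow n.le_succ)).add ((isBigO_refl _ _).const_mul_left _)).congr_left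
      fun x => by ring
  have hu_tendsto : Tendsto u (𝓝[>] 0) (𝓝 0) :=
    hu.trans_tendsto ((continuous_pow n).tendsto' 0 0 (zero_pow hn.ne') |>.mono_left
      nhdsWithin_le_nhds)
  have hlog : (fun x => -log (1 - u x) - u x) =O[𝓝[>] 0] fun x => x ^ (n + 1) :=
    (isBigO_neg_log_one_sub_sub_self.comp_tendsto hu_tendsto).trans <|
      (hu.pow 2).trans (by simpa only [← pow_mul] using hpow (by omega : n + 1 ≤ n * 2))
  exact (hlog.add hmain).congr_left fun x => by ring
end

section
/- Let p, r, N, D ≥ 1 and q ≥ 0 be integers. Consider the finite uniform probability space whose sample points are pairs (pos, σ), where pos : Fin D → Fin (p+q) → Fin r → Fin N is an arbitrary placement function (all N^{D(p+q)r} placements equally likely, modeling that every chunk is placed on an independently, uniformly chosen node) and σ is a permutation of Fin N (all N! removal orders equally likely, independent of pos). For l ∈ {0,…,N} let R_l(σ) = {σ(0), …, σ(l−1)} be the set of the first l removed nodes. Define the data persistency X(pos, σ) as the least l ∈ {1,…,N} such that there exists a document d ∈ Fin D with #{ i ∈ Fin (p+q) : for every j ∈ Fin r, pos d i j ∈ R_l(σ)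 } ≥ q+1 (such an l always exists since R_N(σ) contains every node). Then the expected value of X over this uniform probability space equals Σ_{l=0}^{N} (1 − I_{(l/N)^r}(q+1, p))^D. -/
open Classical in
/-- Data persistency for the random replication strategy: given a placement
`pos` of the `r` copies of the `p+q` chunks of each of the `D` documents on
`N` nodes, and a removal order `σ`, this is the least `l ≥ 1` such that after
removing the nodes `σ 0, …, σ (l-1)` some document `d` has at least `q+1` of
its `p+q` replication multisets entirely contained in the removed nodes. -/
noncomputable def randPersistency (p q r N D : ℕ)
    (pos : Fin D → Fin (p + q) → Fin r → Fin N) (σ : Equiv.Perm (Fin N)) : ℕ :=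
  sInf {l | 1 ≤ l ∧ ∃ d : Fin D,
    q + 1 ≤ (Finset.univ.filter (fun i : Fin (p + q) =>
      ∀ j : Fin r, ∃ k : Fin N, (k : ℕ) < l ∧ σ k = pos d i j)).card}

/-!
`l < X` holds exactly when, after the first `l` removals, every document has lost at most `q`
chunks, so `E X = ∑_{l ≤ N} P(l < X)`. For a fixed removal order, each chunk is lost
independently with probability `x = (l/N)^r`, so the number of lost chunks of a document is
binomial with parameters `p + q` and `x`, the documents are independent, and
`P(l < X) = P(Bin(p + q, x) ≤ q)^D`. Finally, the lower binomial tail is a sum of Bernstein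
polynomials whose derivative telescopes to a multiple of the Beta density `t^q (1 - t)^(p-1)`,
which identifies it with `1 - I_x(q + 1, p)`.
-/

open Finset Polynomial

open Classical in
noncomputable def uniformProb {Ω : Type*} [Fintype Ω] (P : Ω → Prop) : ℝ :=
  #{ω | P ω} / Fintype.card Ω

section UniformProb

variable {Ω α β : Type*} [Fintype Ω] [Fintype α] [Fintype β]

theorem uniformProb_eq (P : Ω → Prop) [DecidablePred P] :
    uniformProb P = #{ω | P ω} / Fintype.card Ω := by
  rw [uniformProb]
  congr

theorem sum_div_card_eq_sum_uniformProb_lt (f : Ω → ℕ) {M : ℕ} (hf : ∀ ω, f ω ≤ M) :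
    (∑ ω, (f ω : ℝ)) / Fintype.card Ω =
      ∑ l ∈ range (M + 1), uniformProb (fun ω => l < f ω) := by
  have layer (ω : Ω) : (f ω : ℝ) = ∑ l ∈ range (M + 1), if l < f ω then 1 else 0 := by
    have : {l ∈ range (M + 1) | l < f ω} = range (f ω) := by
      ext l
      simp only [mem_filter, mem_range]
      have := hf ω
      omega
    rw [sum_boole, this, card_range]
  simp only [layer, uniformProb_eq, ← sum_div]
  rw [sum_comm]
  simp [sum_boole]

theorem uniformProb_le_eq_sum (f : Ω → ℕ) (s : ℕ) :
    uniformProb (fun ω => f ω ≤ s) = ∑ m ∈ range (s + 1), uniformProb (fun ω => f ω = m) := by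
  have hmaps : Set.MapsTo f (({ω | f ω ≤ s} : Finset Ω) : Set Ω) (range (s + 1)) :=
    fun ω hω => by simpa [Nat.lt_succ_iff] using hω
  rw [uniformProb_eq, card_eq_sum_card_fiberwise hmaps, Nat.cast_sum, sum_div]
  refine sum_congr rfl fun m hm => ?_
  rw [uniformProb_eq, filter_filter]
  congr 3
  ext ω
  simp only [mem_filter, mem_univ, true_and, and_iff_right_iff_imp]
  rintro rfl
  simpa [Nat.lt_succ_iff] using hm

theorem uniformProb_prod_of_forall [Nonempty β] (P : α → β → Prop) {c : ℝ}
    (h : ∀ b, uniformProb (fun a => P a b) = c) :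
    uniformProb (fun ω : α × β => P ω.1 ω.2) = c := by
  classical
  have hβ : (Fintype.card β : ℝ) ≠ 0 := by positivity
  have hcount : #{ω : α × β | P ω.1 ω.2} = ∑ b, #{a | P a b} := by
    simp only [card_filter, Fintype.sum_prod_type_right]
  calc uniformProb (fun ω : α × β => P ω.1 ω.2)
      = (∑ b, uniformProb (fun a => P a b)) / Fintype.card β := by
        simp only [uniformProb_eq, hcount, Nat.cast_sum, Fintype.card_prod, Nat.cast_mul,
          ← sum_div, div_div]
    _ = c := by simp [h, field]

theorem uniformProb_pi_forall [DecidableEq α] (P : β → Prop) :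
    uniformProb (fun g : α → β => ∀ a, P (g a)) = uniformProb P ^ Fintype.card α := by
  classical
  have : ({g | ∀ a, P (g a)} : Finset (α → β)) = Fintype.piFinset fun _ => {b | P b} := by
    ext g
    simp
  simp [uniformProb_eq, this, div_pow]

theorem card_filter_preimage_eq [DecidableEq α] (P : β → Prop) [DecidablePred P]
    (T : Finset α) :
    #{g : α → β | ({a | P (g a)} : Finset α) = T} =
      #{b | P b} ^ #T * #{b | ¬P b} ^ (Fintype.card α - #T) := by
  have : ({g | ({a | P (g a)} : Finset α) = T} : Finset (α → β)) =
      Fintype.piFinset fun a =>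
        if a ∈ T then ({b | P b} : Finset β) else ({b | ¬P b} : Finset β) := by
    ext g
    simp only [mem_filter, mem_univ, true_and, Fintype.mem_piFinset, Finset.ext_iff]
    refine forall_congr' fun a => ?_
    split_ifs with ha <;> simp [ha]
  rw [this, Fintype.card_piFinset]
  simp only [apply_ite, prod_ite, prod_const, filter_univ_mem, ← compl_filter, card_compl]

theorem card_filter_card_preimage_eq [DecidableEq α] (P : β → Prop) [DecidablePred P]
    (m : ℕ) :
    #{g : α → β | #{a | P (g a)} = m} =
      (Fintype.card α).choose m * #{b | P b} ^ m * #{b | ¬P b} ^ (Fintype.card α - m) := by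
  have hmaps : Set.MapsTo (fun g : α → β => ({a | P (g a)} : Finset α))
      (({g | #{a | P (g a)} = m} : Finset (α → β)) : Set (α → β))
      ((powersetCard m univ : Finset (Finset α)) : Set (Finset α)) :=
    fun g hg => by simpa using hg
  rw [card_eq_sum_card_fiberwise hmaps, sum_congr rfl fun T hT => ?_, sum_const,
    card_powersetCard, card_univ, smul_eq_mul, mul_assoc]
  obtain ⟨-, hTm⟩ := mem_powersetCard.1 hT
  rw [filter_filter, ← hTm, ← card_filter_preimage_eq]
  congr 2
  ext g
  simp only [and_iff_right_iff_imp]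
  rintro rfl
  rfl

theorem uniformProb_card_filter_eq [DecidableEq α] [Nonempty β] (P : β → Prop)
    [DecidablePred P] (m : ℕ) :
    uniformProb (fun g : α → β => #{a | P (g a)} = m) =
      (bernsteinPolynomial ℝ (Fintype.card α) m).eval (uniformProb P) := by
  have hβ : (Fintype.card β : ℝ) ≠ 0 := by positivity
  have hcompl : (#{b | ¬P b} : ℝ) = Fintype.card β - #{b | P b} := by
    rw [eq_sub_iff_add_eq', ← Nat.cast_add, card_filter_add_card_filter_not, card_univ]
  classical
  rw [uniformProb_eq, card_filter_card_preimage_eq, uniformProb_eq, bernsteinPolynomial]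
  rcases le_or_gt m (Fintype.card α) with hm | hm
  · simp only [Nat.cast_mul, Nat.cast_pow, hcompl, eval_mul, eval_pow, eval_natCast, eval_X,
      eval_sub, eval_one, Fintype.card_fun]
    rw [one_sub_div hβ, div_pow, div_pow, ← pow_mul_pow_sub _ hm]
    field_simp
  · simp [Nat.choose_eq_zero_of_lt hm]

theorem uniformProb_card_filter_le [DecidableEq α] [Nonempty β] (P : β → Prop)
    [DecidablePred P] (s : ℕ) :
    uniformProb (fun g : α → β => #{a | P (g a)} ≤ s) =
      (∑ m ∈ range (s + 1), bernsteinPolynomial ℝ (Fintype.card α) m).eval (uniformProb P) := by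
  simp only [uniformProb_le_eq_sum, uniformProb_card_filter_eq, eval_finsetSum]

end UniformProb

theorem derivative_sum_range_bernsteinPolynomial (R : Type*) [CommRing R] (n q : ℕ) :
    derivative (∑ ν ∈ range (q + 1), bernsteinPolynomial R n ν) =
      -(n : R[X]) * bernsteinPolynomial R (n - 1) q := by
  induction q with
  | zero => simp [bernsteinPolynomial.derivative_zero]
  | succ q ih =>
    rw [sum_range_succ, derivative_add, ih, bernsteinPolynomial.derivative_succ]
    ring

theorem one_sub_regIncBeta {p : ℕ} (hp : 0 < p) (q : ℕ) (x : ℝ) :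
    1 - regIncBeta (q + 1) p x =
      (∑ ν ∈ range (q + 1), bernsteinPolynomial ℝ (p + q) ν).eval x := by
  set F := ∑ ν ∈ range (q + 1), bernsteinPolynomial ℝ (p + q) ν
  set c : ℝ := (p + q) * (p + q - 1).choose q
  have hc : c ≠ 0 := by
    have : 0 < (p + q - 1).choose q := Nat.choose_pos (by omega)
    positivity
  have hderiv (t : ℝ) :
      HasDerivAt (fun t => -F.eval t) (c * (t ^ q * (1 - t) ^ (p - 1))) t := by
    refine (F.hasDerivAt t).fun_neg.congr_deriv ?_
    rw [derivative_sum_range_bernsteinPolynomial]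
    simp [c, bernsteinPolynomial, show p + q - 1 - q = p - 1 by omega]
    ring
  have hint (b : ℝ) :
      ∫ t in (0:ℝ)..b, t ^ q * (1 - t) ^ (p - 1) = (F.eval 0 - F.eval b) / c := by
    rw [eq_div_iff hc, mul_comm, ← intervalIntegral.integral_const_mul,
      intervalIntegral.integral_eq_sub_of_hasDerivAt (fun t _ => hderiv t)
        (Continuous.intervalIntegrable (by fun_prop) _ _)]
    ring
  have hF0 : F.eval 0 = 1 := by simp [F, eval_finsetSum, bernsteinPolynomial.eval_at_0]
  have hF1 : F.eval 1 = 0 := by simp [F, eval_finsetSum, bernsteinPolynomial.eval_at_1, hp.ne']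
  simp only [regIncBeta, Nat.add_sub_cancel, hint, hF0, hF1]
  field_simp
  ring

theorem Nat.lt_sInf_iff_notMem {S : Set ℕ} (hS : IsUpperSet S) (hne : S.Nonempty) {l : ℕ} :
    l < sInf S ↔ l ∉ S :=
  ⟨Nat.notMem_of_lt_sInf, fun hl => lt_of_not_ge fun h => hl (hS h (Nat.sInf_mem hne))⟩

section LostChunks

variable {n r N D : ℕ} (pos : Fin D → Fin n → Fin r → Fin N) (σ : Equiv.Perm (Fin N))

def lostChunks (l : ℕ) (d : Fin D) : Finset (Fin n) :=
  {i | ∀ j : Fin r, ∃ k : Fin N, (k : ℕ) < l ∧ σ k = pos d i j}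

variable (d : Fin D)

theorem lostChunks_mono {l l' : ℕ} (h : l ≤ l') :
    lostChunks pos σ l d ⊆ lostChunks pos σ l' d :=
  monotone_filter_right _ fun _ _ hi j =>
    let ⟨k, hk, hσk⟩ := hi j
    ⟨k, hk.trans_le h, hσk⟩

theorem lostChunks_zero (hr : 0 < r) : lostChunks pos σ 0 d = ∅ := by
  simp only [lostChunks, not_lt_zero, false_and, exists_false, filter_eq_empty_iff]
  exact fun _ _ h => h ⟨0, hr⟩

theorem lostChunks_of_le {l : ℕ} (h : N ≤ l) : lostChunks pos σ l d = univ :=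
  filter_true_of_mem fun i _ j =>
    ⟨σ.symm (pos d i j), (σ.symm _).isLt.trans_le h, σ.apply_symm_apply _⟩

end LostChunks

section RandPersistency

variable {p q r N D : ℕ} (pos : Fin D → Fin (p + q) → Fin r → Fin N) (σ : Equiv.Perm (Fin N))

theorem exists_lostChunks_of_le (hp : 0 < p) (hD : 0 < D) {l : ℕ} (h : N ≤ l) :
    ∃ d, q + 1 ≤ #(lostChunks pos σ l d) :=
  ⟨⟨0, hD⟩, by rw [lostChunks_of_le pos σ _ h, card_univ, Fintype.card_fin]; omega⟩

theorem lt_randPersistency_iff (hp : 0 < p) (hr : 0 < r) (hD : 0 < D) (l : ℕ) :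
    l < randPersistency p q r N D pos σ ↔ ∀ d, #(lostChunks pos σ l d) ≤ q := by
  set S := {l | 1 ≤ l ∧ ∃ d, q + 1 ≤ #(lostChunks pos σ l d)}
  have hS : IsUpperSet S := fun a b hab ⟨ha, d, hd⟩ =>
    ⟨ha.trans hab, d, hd.trans (card_le_card (lostChunks_mono pos σ d hab))⟩
  have hne : S.Nonempty := ⟨N + 1, N.succ_pos, exists_lostChunks_of_le pos σ hp hD N.le_succ⟩
  change l < sInf S ↔ _
  rw [Nat.lt_sInf_iff_notMem hS hne]
  rcases Nat.eq_zero_or_pos l with rfl | hl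
  · simp [S, lostChunks_zero pos σ _ hr]
  · simp only [S, Set.mem_ofPred_eq, not_and, not_exists, not_le, Nat.lt_succ_iff]
    exact ⟨fun h => h hl, fun h _ => h⟩

theorem randPersistency_le (hp : 0 < p) (hN : 0 < N) (hD : 0 < D) :
    randPersistency p q r N D pos σ ≤ N :=
  Nat.sInf_le (s := {l | 1 ≤ l ∧ ∃ d, q + 1 ≤ #(lostChunks pos σ l d)})
    ⟨hN, exists_lostChunks_of_le pos σ hp hD le_rfl⟩

end RandPersistency

theorem uniformProb_removed {N l : ℕ} (σ : Equiv.Perm (Fin N)) (hl : l ≤ N) :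
    uniformProb (fun x : Fin N => ∃ k : Fin N, (k : ℕ) < l ∧ σ k = x) = l / N := by
  have : ({x | ∃ k : Fin N, (k : ℕ) < l ∧ σ k = x} : Finset (Fin N)) =
      image σ {k | (k : ℕ) < l} := by
    ext
    simp
  rw [uniformProb_eq, this, card_image_of_injective _ σ.injective, Fin.card_filter_val_lt,
    min_eq_right hl, Fintype.card_fin]

theorem uniformProb_lt_randPersistency {p q r N D l : ℕ} (hp : 0 < p) (hr : 0 < r)
    (hN : 0 < N) (hD : 0 < D) (hl : l ≤ N) :
    uniformProb (fun ω : (Fin D → Fin (p + q) → Fin r → Fin N) × Equiv.Perm (Fin N) =>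
        l < randPersistency p q r N D ω.1 ω.2) =
      ((∑ ν ∈ range (q + 1), bernsteinPolynomial ℝ (p + q) ν).eval (((l : ℝ) / N) ^ r)) ^ D := by
  have : NeZero N := ⟨hN.ne'⟩
  simp_rw [lt_randPersistency_iff _ _ hp hr hD]
  refine uniformProb_prod_of_forall (fun pos σ => ∀ d, #(lostChunks pos σ l d) ≤ q)
    fun σ => ?_
  unfold lostChunks
  rw [uniformProb_pi_forall (fun g : Fin (p + q) → Fin r → Fin N =>
      #{i | ∀ j : Fin r, ∃ k : Fin N, (k : ℕ) < l ∧ σ k = g i j} ≤ q),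
    uniformProb_card_filter_le
      (fun h : Fin r → Fin N => ∀ j, ∃ k : Fin N, (k : ℕ) < l ∧ σ k = h j),
    uniformProb_pi_forall (fun x => ∃ k : Fin N, (k : ℕ) < l ∧ σ k = x),
    uniformProb_removed σ hl]
  simp [div_pow]

theorem stmt6 (p q r N D : ℕ) (hp : 1 ≤ p) (hr : 1 ≤ r) (hN : 1 ≤ N)
    (hD : 1 ≤ D) :
    (∑ ω : (Fin D → Fin (p + q) → Fin r → Fin N) × Equiv.Perm (Fin N),
        (randPersistency p q r N D ω.1 ω.2 : ℝ)) /
      (Fintype.card ((Fin D → Fin (p + q) → Fin r → Fin N) ×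
        Equiv.Perm (Fin N)) : ℝ)
      = ∑ l ∈ Finset.range (N + 1),
          (1 - regIncBeta (q + 1) p (((l : ℝ) / (N : ℝ)) ^ r)) ^ D := by
  have hle (ω : (Fin D → Fin (p + q) → Fin r → Fin N) × Equiv.Perm (Fin N)) :
      randPersistency p q r N D ω.1 ω.2 ≤ N :=
    randPersistency_le ω.1 ω.2 hp hN hD
  rw [sum_div_card_eq_sum_uniformProb_lt _ hle]
  refine sum_congr rfl fun l hl => ?_
  rw [uniformProb_lt_randPersistency hp hr hN hD (mem_range_succ_iff.1 hl), one_sub_regIncBeta hp]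
end

section
/- Let p, r, N, D ≥ 1 and q ≥ 0 be integers. Then Σ_{l=0}^{N} (1 − I_{(l/N)^r}(q+1, p))^D ≥ Σ_{l=0}^{N} (1 − I_{(l/N)^r}(q+1, p+1))^D. Consequently, among all p ≥ 1, the expected data persistency of random replicated erasure codes REC(p, p+q, r), which equals Σ_{l=0}^{N} (1 − I_{(l/N)^r}(q+1, p))^D, is maximal at p = 1. -/
namespace RIBAux

noncomputable def J (m n : ℕ) (x : ℝ) : ℝ :=
  (∫ t in (0:ℝ)..1, t ^ m * (1 - t) ^ n)⁻¹ * ∫ t in (0:ℝ)..x, t ^ m * (1 - t) ^ n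

lemma contf (m n : ℕ) : Continuous (fun t : ℝ => t ^ m * (1 - t) ^ n) := by
  continuity

lemma intg (m n : ℕ) (a b : ℝ) :
    IntervalIntegrable (fun t : ℝ => t ^ m * (1 - t) ^ n) MeasureTheory.volume a b :=
  (contf m n).intervalIntegrable a b

lemma Bpos (m n : ℕ) : 0 < ∫ t in (0:ℝ)..1, t ^ m * (1 - t) ^ n := by
  apply intervalIntegral.intervalIntegral_pos_of_pos_on (intg m n 0 1)
  · intro t ht
    exact mul_pos (pow_pos ht.1 _) (pow_pos (by linarith [ht.2]) _)
  · norm_num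

lemma part_nonneg (m n : ℕ) {a b : ℝ} (hab : a ≤ b) (ha : 0 ≤ a) (hb : b ≤ 1) :
    0 ≤ ∫ t in a..b, t ^ m * (1 - t) ^ n := by
  apply intervalIntegral.integral_nonneg hab
  intro t ht
  exact mul_nonneg (pow_nonneg (le_trans ha ht.1) _)
    (pow_nonneg (by linarith [ht.2]) _)

lemma J_nonneg (m n : ℕ) {x : ℝ} (hx0 : 0 ≤ x) (hx1 : x ≤ 1) : 0 ≤ J m n x :=
  mul_nonneg (inv_nonneg.2 (Bpos m n).le) (part_nonneg m n hx0 le_rfl hx1)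

lemma J_le_one (m n : ℕ) {x : ℝ} (hx0 : 0 ≤ x) (hx1 : x ≤ 1) : J m n x ≤ 1 := by
  unfold J
  rw [inv_mul_le_iff₀ (Bpos m n), mul_one,
    ← intervalIntegral.integral_add_adjacent_intervals (intg m n 0 x) (intg m n x 1)]
  have := part_nonneg m n hx1 hx0 le_rfl
  linarith

lemma J_mono (m n : ℕ) {x : ℝ} (hx0 : 0 ≤ x) (hx1 : x ≤ 1) :
    J m n x ≤ J m (n + 1) x := by
  set f : ℝ → ℝ := fun t => t ^ m * (1 - t) ^ n with hf
  set g : ℝ → ℝ := fun t => t ^ m * (1 - t) ^ (n + 1) with hg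
  have hgf : ∀ t : ℝ, g t = f t * (1 - t) := by
    intro t; simp only [hf, hg, pow_succ]; ring
  set A1 := ∫ t in (0:ℝ)..x, f t with hA1def
  set A2 := ∫ t in x..(1:ℝ), f t with hA2def
  set B1 := ∫ t in (0:ℝ)..x, g t with hB1def
  set B2 := ∫ t in x..(1:ℝ), g t with hB2def
  have hA1 : 0 ≤ A1 := part_nonneg m n hx0 le_rfl hx1
  have hA2 : 0 ≤ A2 := part_nonneg m n hx1 hx0 le_rfl
  have hB2 : 0 ≤ B2 := part_nonneg m (n + 1) hx1 hx0 le_rfl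
  -- (1-x) * A1 ≤ B1
  have hc : Continuous (fun t : ℝ => (1 - x) * f t) := by
    exact (continuous_const.mul (contf m n))
  have h1 : (1 - x) * A1 ≤ B1 := by
    rw [hA1def, ← intervalIntegral.integral_const_mul]
    apply intervalIntegral.integral_mono_on hx0 (hc.intervalIntegrable 0 x)
      (intg m (n + 1) 0 x)
    intro t ht
    rw [show t ^ m * (1 - t) ^ (n + 1) = f t * (1 - t) by rw [hf]; ring]
    have hft : 0 ≤ f t := mul_nonneg (pow_nonneg ht.1 _)
      (pow_nonneg (by linarith [le_trans ht.2 hx1]) _)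
    have : (1 - x) ≤ (1 - t) := by linarith [ht.2]
    nlinarith
  -- B2 ≤ (1-x) * A2
  have h2 : B2 ≤ (1 - x) * A2 := by
    rw [hA2def, ← intervalIntegral.integral_const_mul]
    apply intervalIntegral.integral_mono_on hx1 (intg m (n + 1) x 1)
      (hc.intervalIntegrable x 1)
    intro t ht
    rw [show t ^ m * (1 - t) ^ (n + 1) = f t * (1 - t) by rw [hf]; ring]
    have hft : 0 ≤ f t := mul_nonneg (pow_nonneg (le_trans hx0 ht.1) _)
      (pow_nonneg (by linarith [ht.2]) _)
    have : (1 - t) ≤ (1 - x) := by linarith [ht.1]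
    nlinarith
  have key : A1 * (B1 + B2) ≤ B1 * (A1 + A2) := by
    nlinarith [mul_le_mul_of_nonneg_left h2 hA1, mul_le_mul_of_nonneg_right h1 hA2]
  have hTf : (∫ t in (0:ℝ)..1, f t) = A1 + A2 :=
    (intervalIntegral.integral_add_adjacent_intervals (intg m n 0 x) (intg m n x 1)).symm
  have hTg : (∫ t in (0:ℝ)..1, g t) = B1 + B2 :=
    (intervalIntegral.integral_add_adjacent_intervals (intg m (n + 1) 0 x)
      (intg m (n + 1) x 1)).symm
  have hTfpos : 0 < A1 + A2 := hTf ▸ Bpos m n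
  have hTgpos : 0 < B1 + B2 := hTg ▸ Bpos m (n + 1)
  unfold J
  rw [hTf, hTg, inv_mul_eq_div, inv_mul_eq_div, div_le_div_iff₀ hTfpos hTgpos]
  linarith [key]

lemma J_chain (m n : ℕ) {x : ℝ} (hx0 : 0 ≤ x) (hx1 : x ≤ 1) :
    J m 0 x ≤ J m n x := by
  induction n with
  | zero => exact le_rfl
  | succ k ih => exact le_trans ih (J_mono m k hx0 hx1)

lemma reg_eq (q b : ℕ) (x : ℝ) : regIncBeta (q + 1) b x = J q (b - 1) x := by
  simp [regIncBeta, J]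

end RIBAux

theorem stmt7 (p q r N D : ℕ) (hp : 1 ≤ p) (hr : 1 ≤ r) (hN : 1 ≤ N)
    (hD : 1 ≤ D) :
    (∑ l ∈ Finset.range (N + 1),
        (1 - regIncBeta (q + 1) p (((l : ℝ) / (N : ℝ)) ^ r)) ^ D
      ≥ ∑ l ∈ Finset.range (N + 1),
          (1 - regIncBeta (q + 1) (p + 1) (((l : ℝ) / (N : ℝ)) ^ r)) ^ D) ∧
    (∑ l ∈ Finset.range (N + 1),
        (1 - regIncBeta (q + 1) 1 (((l : ℝ) / (N : ℝ)) ^ r)) ^ D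
      ≥ ∑ l ∈ Finset.range (N + 1),
          (1 - regIncBeta (q + 1) p (((l : ℝ) / (N : ℝ)) ^ r)) ^ D) := by
  open RIBAux in
  have hx : ∀ l ∈ Finset.range (N + 1),
      0 ≤ ((l : ℝ) / (N : ℝ)) ^ r ∧ ((l : ℝ) / (N : ℝ)) ^ r ≤ 1 := by
    intro l hl
    have hlN : (l : ℝ) ≤ (N : ℝ) := by
      exact_mod_cast Nat.lt_succ_iff.mp (Finset.mem_range.mp hl)
    have hNpos : (0 : ℝ) < N := by exact_mod_cast hN
    have h01 : 0 ≤ (l : ℝ) / (N : ℝ) := by positivity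
    have h11 : (l : ℝ) / (N : ℝ) ≤ 1 := by
      rw [div_le_one hNpos]; exact hlN
    exact ⟨pow_nonneg h01 _, pow_le_one₀ h01 h11⟩
  constructor
  · apply Finset.sum_le_sum
    intro l hl
    obtain ⟨hx0, hx1⟩ := hx l hl
    set x := ((l : ℝ) / (N : ℝ)) ^ r
    rw [RIBAux.reg_eq, RIBAux.reg_eq]
    have hmono : RIBAux.J q (p - 1) x ≤ RIBAux.J q (p + 1 - 1) x := by
      have : p + 1 - 1 = (p - 1) + 1 := by omega
      rw [this]
      exact RIBAux.J_mono q (p - 1) hx0 hx1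
    have hle1 : RIBAux.J q (p + 1 - 1) x ≤ 1 := RIBAux.J_le_one q _ hx0 hx1
    exact pow_le_pow_left₀ (by linarith) (by linarith) D
  · apply Finset.sum_le_sum
    intro l hl
    obtain ⟨hx0, hx1⟩ := hx l hl
    set x := ((l : ℝ) / (N : ℝ)) ^ r
    rw [RIBAux.reg_eq, RIBAux.reg_eq]
    have hmono : RIBAux.J q (1 - 1) x ≤ RIBAux.J q (p - 1) x :=
      RIBAux.J_chain q (p - 1) hx0 hx1
    have hle1 : RIBAux.J q (p - 1) x ≤ 1 := RIBAux.J_le_one q _ hx0 hx1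
    exact pow_le_pow_left₀ (by linarith) (by linarith) D
end

section
/- Let q ≥ 0, r ≥ 1, N ≥ 1 and D ≥ 1 be integers. Then | Σ_{l=0}^{N} (1 − (l/N)^{r(q+1)})^D − (N/(r(q+1)))·B(D+1, 1/(r(q+1))) | ≤ 1, where B(a,b) = Γ(a)Γ(b)/Γ(a+b) is the Beta function and Γ is the real Gamma function. Consequently, the expected data persistency of random replicated erasure codes REC(1, 1+q, r) with N nodes and D documents equals (N/(r(q+1)))·B(D+1, 1/(r(q+1))) up to an error of absolute value at most 1. -/
/-!
With `m = r (q + 1)` and `f x = (1 - x ^ m) ^ D`, the sum is a Riemann sum of the decreasing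
function `f` on `[0, 1]` taken at both endpoints, so it lies between `N ∫ f + f 1` and
`N ∫ f + f 0`, where `0 ≤ f 1` and `f 0 = 1`. Expanding `f` binomially,
`∫ f = ∑ₖ (-1)ᵏ C(D, k) / (m k + 1) = (1 / m) ∑ₖ (-1)ᵏ C(D, k) / (1 / m + k)`; up to sign the last
sum is the `D`-th forward difference of `x ↦ x⁻¹` at `1 / m`, which is
`D! / ∏_{j ≤ D} (1 / m + j) = B(D + 1, 1 / m)`.
-/

/-- The Beta function `B(a,b) = Γ(a)·Γ(b)/Γ(a+b)` for real `a, b`. -/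
noncomputable def betaFun (a b : ℝ) : ℝ :=
  Real.Gamma a * Real.Gamma b / Real.Gamma (a + b)

open Finset fwdDiff
open scoped Nat

theorem betaFun_nat_add_one_left {s : ℝ} (hs : 0 < s) (n : ℕ) :
    betaFun (n + 1) s = n ! / ∏ j ∈ range (n + 1), (s + j) := by
  apply Complex.ofReal_injective
  have hs' : 0 < (s : ℂ).re := by simpa using hs
  have hn : 0 < ((n : ℂ) + 1).re := by simp; positivity
  rw [betaFun, mul_comm (Real.Gamma _), add_comm ((n : ℝ) + 1)]
  push_cast [← Complex.Gamma_ofReal]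
  rw [← Complex.betaIntegral_eq_Gamma_mul_div _ _ hs' hn,
    Complex.betaIntegral_eval_nat_add_one_right hs']

theorem fwdDiff_iter_inv (n : ℕ) {x : ℝ} (hx : 0 < x) :
    (Δ_[1])^[n] (fun y : ℝ => y⁻¹) x = (-1) ^ n * n ! / ∏ j ∈ range (n + 1), (x + j) := by
  induction n generalizing x with
  | zero => simp
  | succ n ih =>
    have hP : 0 < ∏ j ∈ range (n + 1), (x + j) := prod_pos fun j _ => by positivity
    have hQ : 0 < ∏ j ∈ range (n + 1), (x + 1 + j) := prod_pos fun j _ => by positivity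
    have h_last : ∏ j ∈ range (n + 2), (x + j) =
        (∏ j ∈ range (n + 1), (x + j)) * (x + n + 1) := by
      rw [prod_range_succ]; push_cast; ring
    have h_first : ∏ j ∈ range (n + 2), (x + j) = x * ∏ j ∈ range (n + 1), (x + 1 + j) := by
      rw [prod_range_succ']; push_cast; simp only [add_assoc, add_comm (1 : ℝ)]; ring
    have h_rel := h_first.symm.trans h_last
    rw [Function.iterate_succ_apply', fwdDiff, ih (by positivity), ih hx, h_first]
    generalize ∏ j ∈ range (n + 1), (x + j) = P at *
    generalize ∏ j ∈ range (n + 1), (x + 1 + j) = Q at *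
    rw [Nat.factorial_succ]
    field_simp
    push_cast
    linear_combination -(-1) ^ n * (n ! : ℝ) * h_rel

theorem sum_neg_one_pow_mul_choose_div_add (n : ℕ) {x : ℝ} (hx : 0 < x) :
    ∑ k ∈ range (n + 1), (-1) ^ k * n.choose k / (x + k) =
      n ! / ∏ j ∈ range (n + 1), (x + j) := by
  have h_sign : ∀ k ∈ range (n + 1),
      ((-1 : ℤ) ^ (n - k) * n.choose k) • (x + k • (1 : ℝ))⁻¹ =
        (-1) ^ n * ((-1) ^ k * n.choose k / (x + k)) := by
    intro k hk
    obtain ⟨j, rfl⟩ := Nat.exists_eq_add_of_le (Nat.lt_succ_iff.mp (mem_range.mp hk))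
    have h_sq : ((-1 : ℝ) ^ k) ^ 2 = 1 := by rw [← pow_mul, pow_mul', neg_one_sq, one_pow]
    rw [Nat.add_sub_cancel_left, zsmul_eq_mul, nsmul_one, pow_add]
    push_cast
    linear_combination -(-1 : ℝ) ^ j * ((k + j).choose k : ℝ) / (x + k) * h_sq
  have h := fwdDiff_iter_eq_sum_shift 1 (fun y : ℝ => y⁻¹) n x
  rw [fwdDiff_iter_inv n hx, sum_congr rfl h_sign, ← mul_sum, mul_div_assoc] at h
  exact (mul_left_cancel₀ (pow_ne_zero n (by norm_num)) h).symm

theorem one_sub_pow_pow_eq_sum (m D : ℕ) (x : ℝ) :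
    (1 - x ^ m) ^ D = ∑ k ∈ range (D + 1), (-1) ^ k * D.choose k * x ^ (m * k) := by
  rw [sub_eq_neg_add, add_pow]
  refine sum_congr rfl fun k _ => ?_
  rw [neg_pow, one_pow, mul_one, pow_mul]
  ring

theorem integral_one_sub_pow_pow_eq_sum (m D : ℕ) :
    ∫ x in (0 : ℝ)..1, (1 - x ^ m) ^ D =
      ∑ k ∈ range (D + 1), (-1 : ℝ) ^ k * D.choose k / (m * k + 1) := by
  simp_rw [one_sub_pow_pow_eq_sum]
  rw [intervalIntegral.integral_finsetSum fun k _ =>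
    (by fun_prop : Continuous _).intervalIntegrable _ _]
  refine sum_congr rfl fun k _ => ?_
  rw [intervalIntegral.integral_const_mul, integral_pow]
  push_cast
  simp [div_eq_mul_inv]

theorem integral_one_sub_pow_pow {m : ℕ} (hm : m ≠ 0) (D : ℕ) :
    ∫ x in (0 : ℝ)..1, (1 - x ^ m) ^ D = 1 / m * betaFun (D + 1) (1 / m) := by
  rw [integral_one_sub_pow_pow_eq_sum, betaFun_nat_add_one_left (by positivity),
    ← sum_neg_one_pow_mul_choose_div_add D (by positivity), mul_sum]
  refine sum_congr rfl fun k _ => ?_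
  field_simp
  ring

theorem natCast_mul_integral_eq_integral_comp_div (f : ℝ → ℝ) {N : ℕ} (hN : N ≠ 0) :
    N * ∫ x in (0 : ℝ)..1, f x = ∫ t in (0 : ℝ)..(0 + N), f (t / N) := by
  rw [intervalIntegral.integral_comp_div f (by positivity), zero_add, zero_div,
    div_self (by positivity), smul_eq_mul]

section RiemannSum

variable {f : ℝ → ℝ} (hf : AntitoneOn f (Set.Icc 0 1))
include hf

theorem AntitoneOn.comp_div_natCast {N : ℕ} (hN : N ≠ 0) :
    AntitoneOn (fun t => f (t / N)) (Set.Icc 0 (0 + N)) := by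
  have hN' : (0 : ℝ) < N := by positivity
  intro a ha b hb hab
  simp only [zero_add, Set.mem_Icc] at ha hb
  exact hf ⟨div_nonneg ha.1 hN'.le, (div_le_one hN').mpr ha.2⟩
    ⟨div_nonneg hb.1 hN'.le, (div_le_one hN').mpr hb.2⟩ (by gcongr)

theorem AntitoneOn.natCast_mul_integral_add_le_sum (N : ℕ) :
    N * (∫ x in (0 : ℝ)..1, f x) + f 1 ≤ ∑ l ∈ range (N + 1), f (l / N) := by
  rcases eq_or_ne N 0 with rfl | hN
  · simpa using hf (by simp) (by simp) zero_le_one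
  rw [natCast_mul_integral_eq_integral_comp_div f hN, sum_range_succ, div_self (by positivity)]
  have := (hf.comp_div_natCast hN).integral_le_sum
  simp only [zero_add] at this ⊢
  gcongr

theorem AntitoneOn.sum_le_natCast_mul_integral_add (N : ℕ) :
    ∑ l ∈ range (N + 1), f (l / N) ≤ N * (∫ x in (0 : ℝ)..1, f x) + f 0 := by
  rcases eq_or_ne N 0 with rfl | hN
  · simp
  rw [natCast_mul_integral_eq_integral_comp_div f hN, sum_range_succ', Nat.cast_zero,
    zero_div]
  have := (hf.comp_div_natCast hN).sum_le_integral
  simp only [zero_add] at this ⊢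
  gcongr

end RiemannSum

theorem antitoneOn_one_sub_pow_pow (m D : ℕ) :
    AntitoneOn (fun x : ℝ => (1 - x ^ m) ^ D) (Set.Icc 0 1) := by
  intro a ha b hb hab
  exact pow_le_pow_left₀ (sub_nonneg.2 (pow_le_one₀ hb.1 hb.2))
    (sub_le_sub_left (pow_le_pow_left₀ ha.1 hab m) 1) D

theorem stmt16_general (q r N D : ℕ) (hr : 1 ≤ r) :
    |(∑ l ∈ Finset.range (N + 1),
        ((1 : ℝ) - ((l : ℝ) / (N : ℝ)) ^ (r * (q + 1))) ^ D) -
      ((N : ℝ) / ((r : ℝ) * ((q : ℝ) + 1))) *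
        betaFun ((D : ℝ) + 1) (1 / ((r : ℝ) * ((q : ℝ) + 1)))| ≤ 1 := by
  set m := r * (q + 1)
  have hm : m ≠ 0 := by positivity
  have hm_cast : (r : ℝ) * ((q : ℝ) + 1) = m := by push_cast [m]; ring
  rw [hm_cast, div_eq_mul_one_div (N : ℝ), mul_assoc, ← integral_one_sub_pow_pow hm]
  have hf := antitoneOn_one_sub_pow_pow m D
  have lower := hf.natCast_mul_integral_add_le_sum N
  have upper := hf.sum_le_natCast_mul_integral_add N
  have at_one : 0 ≤ (1 - (1 : ℝ) ^ m) ^ D := by simp [pow_nonneg]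
  have at_zero : (1 - (0 : ℝ) ^ m) ^ D = 1 := by simp [hm]
  rw [abs_le]
  constructor <;> linarith

theorem stmt16 (q r N D : ℕ) (hr : 1 ≤ r) (hN : 1 ≤ N) (hD : 1 ≤ D) :
    |(∑ l ∈ Finset.range (N + 1),
        ((1 : ℝ) - ((l : ℝ) / (N : ℝ)) ^ (r * (q + 1))) ^ D) -
      ((N : ℝ) / ((r : ℝ) * ((q : ℝ) + 1))) *
        betaFun ((D : ℝ) + 1) (1 / ((r : ℝ) * ((q : ℝ) + 1)))| ≤ 1 :=
  stmt16_general q r N D hr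
end
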